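/- arXiv:2506.08988 — 3 statements merged into one kernel-verified Lean document; each statement's English description precedes it below -/
import Mathlib

section
/- Let x = (x₀, x̄) and y = (y₀, ȳ) be elements of ℝ × EuclideanSpace ℝ (Fin n) belonging to the second-order cone, i.e. ‖x̄‖ ≤ x₀ and ‖ȳ‖ ≤ y₀. If ⟨x, y⟩ = x₀·y₀ + ⟪x̄, ȳ⟫ = 0, then either x = 0, or y = 0, or there exists a constant κ > 0 such that x₀ = κ·y₀ and x̄ = -κ • ȳ. -/
/-!
Cauchy–Schwarz and the cone conditions give
`x₀ y₀ = -⟪x̄, ȳ⟫ ≤ ‖x̄‖ ‖ȳ‖ ≤ x₀ y₀`, so when `x₀, y₀ > 0` both cone constraints are active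
(`‖x̄‖ = x₀`, `‖ȳ‖ = y₀`) and Cauchy–Schwarz holds with equality for `x̄` and `-ȳ`, which makes
`x̄` a nonpositive multiple of `ȳ`, necessarily `-(x₀ / y₀) • ȳ`. If `x₀ = 0` or `y₀ = 0`, the cone
condition forces the whole vector to vanish.
-/

open RealInnerProductSpace

theorem prod_mk_eq_zero_of_norm_le_of_eq_zero {E : Type*} [NormedAddCommGroup E] {u : E} {a : ℝ}
    (hu : ‖u‖ ≤ a) (ha : a = 0) : (a, u) = 0 := by
  subst ha
  rw [norm_le_zero_iff.mp hu, Prod.mk_zero_zero]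

variable {F : Type*} [NormedAddCommGroup F] [InnerProductSpace ℝ F]

theorem norm_eq_of_mul_add_real_inner_eq_zero {u v : F} {a b : ℝ} (hu : ‖u‖ ≤ a) (hv : ‖v‖ ≤ b)
    (hb : 0 < b) (h : a * b + ⟪u, v⟫ = 0) : ‖u‖ = a := by
  have hab : a * b ≤ ‖u‖ * ‖v‖ := by linarith [neg_le_of_abs_le (abs_real_inner_le_norm u v)]
  by_contra hne
  have : ‖u‖ * ‖v‖ < a * b :=
    calc ‖u‖ * ‖v‖ ≤ ‖u‖ * b := mul_le_mul_of_nonneg_left hv (norm_nonneg u)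
      _ < a * b := mul_lt_mul_of_pos_right (hu.lt_of_ne hne) hb
  linarith

theorem eq_neg_smul_of_real_inner_eq_neg_norm_mul {u v : F} (hv : v ≠ 0)
    (h : ⟪u, v⟫ = -(‖u‖ * ‖v‖)) : u = -(‖u‖ / ‖v‖) • v := by
  have hcs : ⟪v, -u⟫ = ‖v‖ * ‖-u‖ := by
    rw [inner_neg_right, real_inner_comm, h, norm_neg, mul_comm, neg_neg]
  have hpos : (‖-u‖ / ‖v‖) • v = -u := (inner_eq_norm_mul_iff_div hv).mp hcs
  rw [norm_neg] at hpos
  rw [neg_smul, hpos, neg_neg]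

/-- Lemma 1 of the paper: complementarity on the second-order cone. -/
theorem soc_complementarity (n : ℕ) (x₀ y₀ : ℝ) (xbar ybar : EuclideanSpace ℝ (Fin n))
    (hx : ‖xbar‖ ≤ x₀) (hy : ‖ybar‖ ≤ y₀)
    (h : x₀ * y₀ + ⟪xbar, ybar⟫ = 0) :
    ((x₀, xbar) : ℝ × EuclideanSpace ℝ (Fin n)) = 0 ∨
      ((y₀, ybar) : ℝ × EuclideanSpace ℝ (Fin n)) = 0 ∨
      ∃ κ : ℝ, 0 < κ ∧ x₀ = κ * y₀ ∧ xbar = -κ • ybar := by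
  rcases ((norm_nonneg xbar).trans hx).eq_or_lt with hx₀ | hx₀
  · exact .inl (prod_mk_eq_zero_of_norm_le_of_eq_zero hx hx₀.symm)
  rcases ((norm_nonneg ybar).trans hy).eq_or_lt with hy₀ | hy₀
  · exact .inr (.inl (prod_mk_eq_zero_of_norm_le_of_eq_zero hy hy₀.symm))
  have hnx : ‖xbar‖ = x₀ := norm_eq_of_mul_add_real_inner_eq_zero hx hy hy₀ h
  have hny : ‖ybar‖ = y₀ :=
    norm_eq_of_mul_add_real_inner_eq_zero hy hx hx₀ (by rwa [mul_comm, real_inner_comm])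
  have hanti : xbar = -(‖xbar‖ / ‖ybar‖) • ybar :=
    eq_neg_smul_of_real_inner_eq_neg_norm_mul (norm_pos_iff.mp (hny ▸ hy₀))
      (by rw [hnx, hny]; linarith)
  refine .inr (.inr ⟨x₀ / y₀, div_pos hx₀ hy₀, (div_mul_cancel₀ x₀ hy₀.ne').symm, ?_⟩)
  rwa [hnx, hny] at hanti
end

section
/- Let x = (x₀, x̄) and y = (y₀, ȳ) be elements of ℝ × EuclideanSpace ℝ (Fin n) belonging to the second-order cone, i.e. ‖x̄‖ ≤ x₀ and ‖ȳ‖ ≤ y₀. If x₀·y₀ + ⟪x̄, ȳ⟫ = 0 and x ≠ 0 and y ≠ 0, then both x and y lie on the boundary of the cone and have positive first component: x₀ = ‖x̄‖ > 0 and y₀ = ‖ȳ‖ > 0; moreover ⟪x̄, ȳ⟫ = -‖x̄‖·‖ȳ‖. -/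
/-!
Write `x = (x₀, x̄)` and `y = (y₀, ȳ)`. Cauchy–Schwarz and the cone conditions give
`x₀ y₀ = -⟪x̄, ȳ⟫ ≤ ‖x̄‖ ‖ȳ‖ ≤ x₀ y₀`, so both inequalities are equalities. A nonzero point
of the cone has `x₀ > 0` (if `x₀ = 0` then `x̄ = 0`), and then `‖x̄‖ ‖ȳ‖ = x₀ y₀` with
`‖x̄‖ ≤ x₀`, `‖ȳ‖ ≤ y₀` forces `‖x̄‖ = x₀` and `‖ȳ‖ = y₀`.
-/

open RealInnerProductSpace

theorem fst_pos_of_norm_snd_le {E : Type*} [NormedAddCommGroup E] {t : ℝ} {v : E}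
    (hv : ‖v‖ ≤ t) (h0 : (t, v) ≠ 0) : 0 < t := by
  refine ((norm_nonneg v).trans hv).lt_of_ne fun ht => h0 ?_
  have hv0 : v = 0 := norm_le_zero_iff.mp (ht ▸ hv)
  rw [← ht, hv0, Prod.mk_zero_zero]

theorem norm_mul_norm_eq_of_inner_eq_neg_mul {E : Type*} [NormedAddCommGroup E]
    [InnerProductSpace ℝ E] {s t : ℝ} {u v : E} (hu : ‖u‖ ≤ s) (hv : ‖v‖ ≤ t)
    (h : s * t + ⟪u, v⟫ = 0) : ‖u‖ * ‖v‖ = s * t := by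
  have hcs : -(‖u‖ * ‖v‖) ≤ ⟪u, v⟫ := neg_le_of_abs_le (abs_real_inner_le_norm u v)
  exact le_antisymm (mul_le_mul hu hv (norm_nonneg v) ((norm_nonneg u).trans hu)) (by linarith)

theorem eq_of_le_of_mul_eq_mul {a b s t : ℝ} (ha : a ≤ s) (hb : b ≤ t) (ha0 : 0 ≤ a)
    (ht : 0 < t) (h : a * b = s * t) : s = a :=
  le_antisymm (le_of_mul_le_mul_right (h ▸ mul_le_mul_of_nonneg_left hb ha0) ht) ha

/-- If two nonzero points of the second-order cone have vanishing inner product,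
both lie on the boundary of the cone with positive first component, and their
vector parts are anti-aligned. -/
theorem soc_boundary_of_complementarity (n : ℕ) (x₀ y₀ : ℝ)
    (xbar ybar : EuclideanSpace ℝ (Fin n))
    (hx : ‖xbar‖ ≤ x₀) (hy : ‖ybar‖ ≤ y₀)
    (h : x₀ * y₀ + ⟪xbar, ybar⟫ = 0)
    (hx0 : ((x₀, xbar) : ℝ × EuclideanSpace ℝ (Fin n)) ≠ 0)
    (hy0 : ((y₀, ybar) : ℝ × EuclideanSpace ℝ (Fin n)) ≠ 0) :
    (x₀ = ‖xbar‖ ∧ 0 < x₀) ∧ (y₀ = ‖ybar‖ ∧ 0 < y₀) ∧ ⟪xbar, ybar⟫ = -(‖xbar‖ * ‖ybar‖) := by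
  have hx₀ : 0 < x₀ := fst_pos_of_norm_snd_le hx hx0
  have hy₀ : 0 < y₀ := fst_pos_of_norm_snd_le hy hy0
  have hprod : ‖xbar‖ * ‖ybar‖ = x₀ * y₀ := norm_mul_norm_eq_of_inner_eq_neg_mul hx hy h
  have hxe : x₀ = ‖xbar‖ := eq_of_le_of_mul_eq_mul hx hy (norm_nonneg _) hy₀ hprod
  have hye : y₀ = ‖ybar‖ :=
    eq_of_le_of_mul_eq_mul hy hx (norm_nonneg _) hx₀ (by rw [mul_comm, hprod, mul_comm])
  refine ⟨⟨hxe, hx₀⟩, ⟨hye, hy₀⟩, ?_⟩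
  rw [hprod]
  linarith
end

section
/- Let N ≥ 1 and m ≥ 1. Let C₊ = (I_N 0) and C₋ = (0 I_N) be the N × (N+1) real matrices as above, and let F̃ be the real matrix obtained by stacking vertically the two blocks 𝟙₃ ⊗ C₊ ⊗ I_m and 𝟙₃ ⊗ C₋ ⊗ I_m, where 𝟙₃ denotes the 3 × 1 all-ones matrix and ⊗ denotes the Kronecker product. Then F̃ᵀ F̃ = 3 · (D ⊗ I_m), where D is the diagonal (N+1) × (N+1) matrix with diagonal entries (1, 2, …, 2, 1); in particular, F̃ᵀ F̃ is a diagonal matrix. -/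
/-!
Stacking rows adds Gram matrices, and the Gram matrix of a Kronecker product is the Kronecker
product of the Gram matrices. Since `𝟙₃ᵀ𝟙₃ = 3` and `I_mᵀI_m = I_m`, everything reduces to
`C₊ᵀC₊ + C₋ᵀC₋`. Each `C±` is the matrix of an injective map `Fin N → Fin (N + 1)` (`castSucc`
and `succ`), so its Gram matrix is the diagonal indicator of the map's range; the two ranges
miss `N` and `0` respectively, which gives `diag(1, 2, …, 2, 1)` once `N ≥ 1`.
-/

open Matrix Kronecker

namespace Matrix

variable {ι κ ι' κ' R : Type*} [Fintype ι] [Fintype ι'] [CommSemiring R]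

theorem transpose_mul_self_fromRows {ι₁ ι₂ : Type*} [Fintype ι₁] [Fintype ι₂]
    (A : Matrix ι₁ κ R) (B : Matrix ι₂ κ R) :
    (fromRows A B)ᵀ * fromRows A B = Aᵀ * A + Bᵀ * B := by
  rw [transpose_fromRows, fromCols_mul_fromRows]

theorem transpose_mul_self_kronecker (A : Matrix ι κ R) (B : Matrix ι' κ' R) :
    (A ⊗ₖ B)ᵀ * (A ⊗ₖ B) = (Aᵀ * A) ⊗ₖ (Bᵀ * B) := by
  rw [← kroneckerMap_transpose, mul_kronecker_mul]

theorem transpose_mul_self_of_forall_eq_one [Unique κ] [DecidableEq κ] (A : Matrix ι κ R)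
    (hA : ∀ i j, A i j = 1) : Aᵀ * A = (Fintype.card ι : R) • 1 := by
  ext a b
  simp [Subsingleton.elim a b, mul_apply, hA]

theorem transpose_mul_self_of_injective [DecidableEq κ] {f : ι → κ} (hf : f.Injective)
    (A : Matrix ι κ R) (hA : ∀ i j, A i j = if j = f i then 1 else 0) :
    Aᵀ * A = diagonal fun j => if j ∈ Set.range f then 1 else 0 := by
  ext a b
  simp only [mul_apply, transpose_apply, hA, diagonal_apply]
  by_cases ha : a ∈ Set.range f
  · obtain ⟨i, rfl⟩ := ha
    rw [Finset.sum_eq_single i (fun k _ hk => by simp [hf.ne hk.symm]) (by simp)]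
    simp [eq_comm]
  · have hne : ∀ i, a ≠ f i := fun i h => ha ⟨i, h.symm⟩
    simp [hne, ha]

end Matrix

theorem Fin.indicator_range_castSucc_add_indicator_range_succ {R : Type*} [AddMonoidWithOne R]
    {N : ℕ} (hN : 1 ≤ N) (j : Fin (N + 1)) :
    ((if j ∈ Set.range Fin.castSucc then 1 else 0) +
        (if j ∈ Set.range Fin.succ then 1 else 0) : R) =
      if (j : ℕ) = 0 ∨ (j : ℕ) = N then 1 else 2 := by
  simp only [Fin.range_castSucc, Fin.range_succ, Set.mem_ofPred_eq, Set.mem_compl_iff,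
    Set.mem_singleton_iff, Fin.ext_iff, Fin.val_zero]
  have := j.isLt
  split_ifs <;> first | omega | norm_num

theorem copy_operator_gram_general (N m : ℕ) (hN : 1 ≤ N)
    (Cp Cm : Matrix (Fin N) (Fin (N + 1)) ℝ)
    (hCp : ∀ (k : Fin N) (j : Fin (N + 1)), Cp k j = if (j : ℕ) = (k : ℕ) then 1 else 0)
    (hCm : ∀ (k : Fin N) (j : Fin (N + 1)), Cm k j = if (j : ℕ) = (k : ℕ) + 1 then 1 else 0)
    (ones3 : Matrix (Fin 3) (Fin 1) ℝ) (hones : ∀ i j, ones3 i j = 1)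
    (Ft : Matrix ((Fin 3 × Fin N) × Fin m ⊕ (Fin 3 × Fin N) × Fin m)
      ((Fin 1 × Fin (N + 1)) × Fin m) ℝ)
    (hFt : Ft = Matrix.fromRows
      ((ones3 ⊗ₖ Cp) ⊗ₖ (1 : Matrix (Fin m) (Fin m) ℝ))
      ((ones3 ⊗ₖ Cm) ⊗ₖ (1 : Matrix (Fin m) (Fin m) ℝ))) :
    Ftᵀ * Ft = (3 : ℝ) •
        (((1 : Matrix (Fin 1) (Fin 1) ℝ) ⊗ₖ
            Matrix.diagonal (fun j : Fin (N + 1) =>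
              if (j : ℕ) = 0 ∨ (j : ℕ) = N then (1 : ℝ) else 2)) ⊗ₖ
          (1 : Matrix (Fin m) (Fin m) ℝ)) ∧
      (Ftᵀ * Ft).IsDiag := by
  have hOnes : ones3ᵀ * ones3 = (3 : ℝ) • 1 := by
    simpa using transpose_mul_self_of_forall_eq_one ones3 hones
  have hCpGram := transpose_mul_self_of_injective (Fin.castSucc_injective N) Cp
    fun k j => by simp [hCp, Fin.ext_iff]
  have hCmGram := transpose_mul_self_of_injective (Fin.succ_injective N) Cm
    fun k j => by simp [hCm, Fin.ext_iff]
  refine (fun hGram => ⟨hGram, hGram ▸ ?_⟩) ?_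
  · rw [hFt, transpose_mul_self_fromRows, transpose_mul_self_kronecker,
      transpose_mul_self_kronecker, transpose_mul_self_kronecker, transpose_mul_self_kronecker,
      hOnes, hCpGram, hCmGram, transpose_one, Matrix.mul_one, ← add_kronecker, ← kronecker_add,
      diagonal_add, smul_kronecker, smul_kronecker]
    simp only [Fin.indicator_range_castSucc_add_indicator_range_succ hN]
  · exact ((isDiag_one.kronecker (isDiag_diagonal _)).kronecker isDiag_one).smul _

/-- For the copying matrix `F̃` obtained by stacking `𝟙₃ ⊗ C₊ ⊗ I_m` over
`𝟙₃ ⊗ C₋ ⊗ I_m`, the product `F̃ᵀ F̃` equals `3 (D ⊗ I_m)` with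
`D = diag(1, 2, …, 2, 1)`; in particular it is diagonal. -/
theorem copy_operator_gram (N m : ℕ) (hN : 1 ≤ N) (hm : 1 ≤ m)
    (Cp Cm : Matrix (Fin N) (Fin (N + 1)) ℝ)
    (hCp : ∀ (k : Fin N) (j : Fin (N + 1)), Cp k j = if (j : ℕ) = (k : ℕ) then 1 else 0)
    (hCm : ∀ (k : Fin N) (j : Fin (N + 1)), Cm k j = if (j : ℕ) = (k : ℕ) + 1 then 1 else 0)
    (ones3 : Matrix (Fin 3) (Fin 1) ℝ) (hones : ∀ i j, ones3 i j = 1)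
    (Ft : Matrix ((Fin 3 × Fin N) × Fin m ⊕ (Fin 3 × Fin N) × Fin m)
      ((Fin 1 × Fin (N + 1)) × Fin m) ℝ)
    (hFt : Ft = Matrix.fromRows
      ((ones3 ⊗ₖ Cp) ⊗ₖ (1 : Matrix (Fin m) (Fin m) ℝ))
      ((ones3 ⊗ₖ Cm) ⊗ₖ (1 : Matrix (Fin m) (Fin m) ℝ))) :
    Ftᵀ * Ft = (3 : ℝ) •
        (((1 : Matrix (Fin 1) (Fin 1) ℝ) ⊗ₖ
            Matrix.diagonal (fun j : Fin (N + 1) =>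
              if (j : ℕ) = 0 ∨ (j : ℕ) = N then (1 : ℝ) else 2)) ⊗ₖ
          (1 : Matrix (Fin m) (Fin m) ℝ)) ∧
      (Ftᵀ * Ft).IsDiag :=
  copy_operator_gram_general N m hN Cp Cm hCp hCm ones3 hones Ft hFt
end
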